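/- For every nonnegative integer b, the identity ∑_{j=1}^{b} j · (b − 1 + κ_{j−1} + κ_{b−j} − κ_b) = 0 holds. -/

import Mathlib

open Finset Filter Topology

/-- The `n`-th harmonic number `H_n = ∑_{i=1}^n 1/i`. -/
noncomputable def H (n : ℕ) : ℝ := ∑ i ∈ Finset.range n, (1 : ℝ) / (i + 1)

/-- `κ_n = 2(n+1)H_n - 4n`, the mean number of key comparisons for QuickSort on `n` keys. -/
noncomputable def κ (n : ℕ) : ℝ := 2 * (n + 1) * H n - 4 * n

/-! The substitution `j ↦ b + 1 - j` turns the weight `j` on `κ (b - j)` into `b + 1 - j` on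
`κ (j - 1)`, so the weighted sum of the two `κ` terms is `(b + 1) ∑_{k<b} κ_k`. The QuickSort
recurrence in summed form, `2 ∑_{k<b} κ_k = b κ_b - b (b - 1)`, then cancels everything. -/

lemma H_succ (n : ℕ) : H (n + 1) = H n + 1 / (n + 1) := by
  simp [H, sum_range_succ]

lemma two_mul_sum_range_κ (n : ℕ) :
    2 * ∑ k ∈ range n, κ k = n * κ n - n * ((n : ℝ) - 1) := by
  induction n with
  | zero => simp [κ]
  | succ n ih =>
    rw [sum_range_succ, mul_add, ih]
    have hn : (n : ℝ) + 1 ≠ 0 := by positivity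
    simp only [κ, H_succ]
    push_cast
    field_simp
    ring

lemma sum_Icc_one_sub_one {M : Type*} [AddCommMonoid M] (f : ℕ → M) (b : ℕ) :
    ∑ j ∈ Icc 1 b, f (j - 1) = ∑ k ∈ range b, f k := by
  rw [← Ico_add_one_right_eq_Icc, range_eq_Ico, ← sum_Ico_add_right_sub_eq (f := f) 0 b 1,
    zero_add]

lemma sum_Icc_one_reflect {M : Type*} [AddCommMonoid M] (f : ℕ → M) (b : ℕ) :
    ∑ j ∈ Icc 1 b, f (b + 1 - j) = ∑ j ∈ Icc 1 b, f j := by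
  refine sum_nbij' (fun j ↦ b + 1 - j) (fun j ↦ b + 1 - j) ?_ ?_ ?_ ?_ (fun _ _ ↦ rfl) <;>
    intro j hj <;> simp only [mem_Icc] at hj ⊢ <;> omega

lemma sum_Icc_mul_add_reflect (f : ℕ → ℝ) (b : ℕ) :
    ∑ j ∈ Icc 1 b, (j : ℝ) * (f (j - 1) + f (b - j)) = (b + 1) * ∑ k ∈ range b, f k := by
  have reflect : ∑ j ∈ Icc 1 b, (j : ℝ) * f (b - j)
      = ∑ j ∈ Icc 1 b, ((b : ℝ) + 1 - j) * f (j - 1) := by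
    rw [← sum_Icc_one_reflect]
    refine sum_congr rfl fun j hj ↦ ?_
    obtain ⟨hj1, hjb⟩ := mem_Icc.mp hj
    rw [Nat.cast_sub (by omega), show b - (b + 1 - j) = j - 1 by omega]
    push_cast
    ring
  calc ∑ j ∈ Icc 1 b, (j : ℝ) * (f (j - 1) + f (b - j))
      = ∑ j ∈ Icc 1 b, ((j : ℝ) * f (j - 1) + ((b : ℝ) + 1 - j) * f (j - 1)) := by
        rw [sum_add_distrib, ← reflect, ← sum_add_distrib]
        simp only [mul_add]
    _ = (b + 1) * ∑ k ∈ range b, f k := by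
        rw [← sum_Icc_one_sub_one, mul_sum]
        exact sum_congr rfl fun j _ ↦ by ring

theorem weighted_identity (b : ℕ) :
    ∑ j ∈ Finset.Icc 1 b,
      (j : ℝ) * ((b : ℝ) - 1 + κ (j - 1) + κ (b - j) - κ b) = 0 := by
  have gauss : 2 * ∑ j ∈ Icc 1 b, (j : ℝ) = b * (b + 1) :=
    calc 2 * ∑ j ∈ Icc 1 b, (j : ℝ) = ∑ j ∈ Icc 1 b, (j : ℝ) * (1 + 1) := by
          rw [mul_sum]
          exact sum_congr rfl fun _ _ ↦ by ring
      _ = b * (b + 1) := by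
          rw [sum_Icc_mul_add_reflect (fun _ ↦ 1) b]
          simp only [sum_const, card_range, nsmul_eq_mul, mul_one]
          ring
  have split : ∀ j ∈ Icc 1 b, (j : ℝ) * ((b : ℝ) - 1 + κ (j - 1) + κ (b - j) - κ b)
      = ((b : ℝ) - 1 - κ b) * j + (j : ℝ) * (κ (j - 1) + κ (b - j)) :=
    fun _ _ ↦ by ring
  rw [sum_congr rfl split, sum_add_distrib, ← mul_sum, sum_Icc_mul_add_reflect]
  linear_combination
    ((b : ℝ) - 1 - κ b) / 2 * gauss + ((b : ℝ) + 1) / 2 * two_mul_sum_range_κ b
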